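/- arXiv:1903.02712 — 7 statements merged into one kernel-verified Lean document; each statement's English description precedes it below -/
import Mathlib

section
/- Under these hypotheses, f is even, f ≥ 12, v = 2 + 3f/2, the sum Σ_{k≥3} (k−3)·v_k equals f/2 − 6, and the number of degree-3 vertices satisfies v₃ ≥ f + 8. -/
/-!
Counting edges from the faces and from the vertices gives `2e = 5f = Σ k·v_k`, and Euler's
formula then gives `2v = 3f + 4`, so `f` is even and `Σ (k-3)·v_k = 2e - 3v = f/2 - 6`.
This excess is nonnegative, whence `f ≥ 12`, and it bounds the number `v - v₃` of vertices of
degree at least four, whence `v₃ ≥ f + 8`.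
-/

namespace Finsupp

variable {m : ℕ} {d : ℕ →₀ ℕ}

theorem sum_sub_mul_add_mul_sum (hd : ∀ k, d k ≠ 0 → m ≤ k) :
    ((d.sum fun k n => (k - m) * n) + m * d.sum fun _ n => n) = d.sum fun k n => k * n := by
  simp only [Finsupp.sum, Finset.mul_sum, ← Finset.sum_add_distrib, ← add_mul]
  refine Finset.sum_congr rfl fun k hk => ?_
  rw [Nat.sub_add_cancel (hd k (mem_support_iff.mp hk))]

theorem sum_le_apply_add_sum_sub_mul (hd : ∀ k, d k ≠ 0 → m ≤ k) :
    (d.sum fun _ n => n) ≤ d m + d.sum fun k n => (k - m) * n := by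
  have htermwise : ∀ k ∈ d.support, d k ≤ (if k = m then d k else 0) + (k - m) * d k := by
    intro k hk
    have hmk := hd k (mem_support_iff.mp hk)
    split_ifs with hkm
    · omega
    · exact (Nat.le_mul_of_pos_left _ (by omega)).trans (Nat.le_add_left _ _)
  calc (d.sum fun _ n => n)
      ≤ d.sum fun k n => (if k = m then n else 0) + (k - m) * n := Finset.sum_le_sum htermwise
    _ = d m + d.sum fun k n => (k - m) * n := by
      rw [Finsupp.sum_add, Finsupp.sum_ite_self_eq']

end Finsupp

/-- Combinatorics of an edge-to-edge tiling of the sphere by `f` pentagons: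
`f` is even, `f ≥ 12`, `v = 2 + 3f/2`, `Σ (k-3)·v_k = f/2 - 6`, and `v₃ ≥ f + 8`. -/
theorem stmt_0 (f e v : ℕ) (vk : ℕ →₀ ℕ)
    (hsupp : ∀ k, vk k ≠ 0 → 3 ≤ k)
    (hv : v = vk.sum fun _ n => n)
    (heuler : v + f = e + 2)
    (hface : 2 * e = 5 * f)
    (hvert : (vk.sum fun k n => k * n) = 2 * e) :
    Even f ∧ 12 ≤ f ∧ v = 2 + 3 * f / 2 ∧
      (vk.sum fun k n => (k - 3) * n) = f / 2 - 6 ∧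
      f + 8 ≤ vk 3 := by
  have hexcess := Finsupp.sum_sub_mul_add_mul_sum hsupp
  have hdegree3 := Finsupp.sum_le_apply_add_sum_sub_mul hsupp
  rw [← hv, hvert] at hexcess
  rw [← hv] at hdegree3
  have hvertices : 2 * v = 3 * f + 4 := by omega
  exact ⟨Nat.even_iff.mpr (by omega), by omega, by omega, by omega, by omega⟩
end

section
/- Under these hypotheses, f ≥ 24. -/
/-!
Euler's formula with `2e = 5f` gives `2v = 3f + 4`, while the handshake count gives
`Σ k vₖ = 2e = 5f`. Since every degree is at least `3`, `4v ≤ Σ k vₖ + v₃`, which forces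
`v₃ ≥ f + 8`; together with `3 v₃ ≤ 4f` this yields `f ≥ 24`.
-/

theorem Finsupp.succ_mul_sum_le_sum_mul_add_apply (m : ℕ) (vk : ℕ →₀ ℕ)
    (hsupp : ∀ k, vk k ≠ 0 → m ≤ k) :
    (m + 1) * (vk.sum fun _ n => n) ≤ (vk.sum fun k n => k * n) + vk m := by
  calc (m + 1) * (vk.sum fun _ n => n) = vk.sum fun _ n => (m + 1) * n := Finsupp.mul_sum _ _
    _ ≤ vk.sum fun k n => k * n + if k = m then n else 0 := by
      refine Finset.sum_le_sum fun k hk => ?_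
      rcases (hsupp k (Finsupp.mem_support_iff.mp hk)).eq_or_lt with rfl | hlt
      · simp [add_mul]
      · simp only [if_neg hlt.ne', add_zero]
        exact Nat.mul_le_mul_right _ hlt
    _ = (vk.sum fun k n => k * n) + vk m := by
      rw [Finsupp.sum_add, Finsupp.sum_ite_self_eq']

/-- If additionally every face is incident to at most `4` degree-3 vertices (no `3⁵`-tile),
so that the incidence count `3·v₃` is at most `4f`, then `f ≥ 24`. -/
theorem stmt_1 (f e v : ℕ) (vk : ℕ →₀ ℕ)
    (hsupp : ∀ k, vk k ≠ 0 → 3 ≤ k)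
    (hv : v = vk.sum fun _ n => n)
    (heuler : v + f = e + 2)
    (hface : 2 * e = 5 * f)
    (hvert : (vk.sum fun k n => k * n) = 2 * e)
    (hincidence : 3 * vk 3 ≤ 4 * f) :
    24 ≤ f := by
  have hdeg := Finsupp.succ_mul_sum_le_sum_mul_add_apply 3 vk hsupp
  rw [← hv, hvert] at hdeg
  omega
end

section
/- For every vertex x in V, k(x) = l(x). (This is the 'balance lemma': if β can appear at most once at each vertex, then β and γ appear equally often at every vertex.) -/
theorem Nat.le_of_le_one_of_even_add {a b : ℕ} (ha : a ≤ 1) (hab : Even (a + b)) : a ≤ b := by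
  obtain ⟨m, hm⟩ := hab
  omega

/-- Balance lemma: if `β` appears at most once at each vertex, the number of `β`'s
and `γ`'s at each vertex has even sum, and the totals agree, then `β` and `γ`
appear equally often at every vertex. -/
theorem stmt_2 {V : Type*} [Fintype V] (k l : V → ℕ)
    (h1 : ∀ x, k x ≤ 1)
    (h2 : ∀ x, Even (k x + l x))
    (h3 : ∑ x, k x = ∑ x, l x) :
    ∀ x, k x = l x := by
  have hle : ∀ x, k x ≤ l x := fun x => Nat.le_of_le_one_of_even_add (h1 x) (h2 x)
  intro x
  exact (Finset.sum_eq_sum_iff_of_le fun i _ => hle i).mp h3 x (Finset.mem_univ x)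
end

section
/- Then cos β = (√3 − 1)/√(2(4 − √3)), and π/4 < β < π/2; in particular β ≠ π/4. -/
/-!
Solving the relation for `cos β` gives `(2 - √3) cos b / sin b = (√3 - 1) / (2√3 sin b)`, and
`2√3 sin b = √(2(4 - √3))`. This value is positive, and it is below `√2/2 = cos (π/4)` because
`(√3 - 1)² = 4 - 2√3 < 4 - √3`; since `cos` is strictly decreasing on `[0, π]`, `β` lies
strictly between `π/4` and `π/2`.
-/

open Real

theorem cos_angle_eq_of_isosceles_spherical {a b β : ℝ} (ha : sin a ≠ 0) (hb : sin b ≠ 0)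
    (h : cos b = cos a * cos b + sin a * sin b * cos β) :
    cos β = (1 - cos a) * cos b / (sin a * sin b) := by
  rw [eq_div_iff (mul_ne_zero ha hb)]
  linarith

theorem sqrt_two_mul_eq_two_mul_sqrt_three_mul_sqrt_div_six (x : ℝ) :
    √(2 * x) = 2 * √3 * √(x / 6) := by
  have h12 : √12 = 2 * √3 := by
    rw [show (12 : ℝ) = 2 ^ 2 * 3 by norm_num, sqrt_mul (by norm_num), sqrt_sq (by norm_num)]
  rw [← h12, ← sqrt_mul (by norm_num)]
  ring_nf

theorem one_lt_sqrt_three : 1 < √3 := by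
  rw [lt_sqrt zero_le_one]; norm_num

theorem sqrt_three_lt_four : √3 < 4 := by
  rw [sqrt_lt' (by norm_num)]; norm_num

theorem sqrt_three_sub_one_div_pos : 0 < (√3 - 1) / √(2 * (4 - √3)) := by
  have := one_lt_sqrt_three
  have := sqrt_three_lt_four
  positivity

theorem sqrt_three_sub_one_div_lt : (√3 - 1) / √(2 * (4 - √3)) < √2 / 2 := by
  have h4 : 0 < 4 - √3 := by linarith [sqrt_three_lt_four]
  have hsq : √3 - 1 < √(4 - √3) := by
    rw [lt_sqrt (by linarith [one_lt_sqrt_three])]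
    nlinarith [sq_sqrt (show (0 : ℝ) ≤ 3 by norm_num), one_lt_sqrt_three]
  rw [div_lt_div_iff₀ (by positivity) two_pos, sqrt_mul zero_le_two, ← mul_assoc,
    mul_self_sqrt zero_le_two]
  linarith

theorem stmt_10_general (b β : ℝ)
    (hcb : cos b = (3 + Real.sqrt 3) / 6)
    (hsb : sin b = Real.sqrt ((4 - Real.sqrt 3) / 6))
    (hβ : 0 < β) (hβ' : β < π)
    (h : cos b = cos (π / 6) * cos b + sin (π / 6) * sin b * cos β) :
    cos β = (Real.sqrt 3 - 1) / Real.sqrt (2 * (4 - Real.sqrt 3)) ∧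
      π / 4 < β ∧ β < π / 2 := by
  have hsin : 0 < sin b := by
    rw [hsb]; exact sqrt_pos.2 (by linarith [sqrt_three_lt_four])
  have hcos : cos β = (√3 - 1) / √(2 * (4 - √3)) := by
    rw [cos_angle_eq_of_isosceles_spherical (by norm_num) hsin.ne' h, cos_pi_div_six,
      sin_pi_div_six, hcb, sqrt_two_mul_eq_two_mul_sqrt_three_mul_sqrt_div_six, ← hsb]
    field_simp
    linear_combination (-2 * √3 - 2) * sq_sqrt (show (0 : ℝ) ≤ 3 by norm_num)
  have hβI : β ∈ Set.Icc 0 π := ⟨hβ.le, hβ'.le⟩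
  refine ⟨hcos, (strictAntiOn_cos.lt_iff_gt hβI ⟨by positivity, by linarith [pi_pos]⟩).1 ?_,
    (strictAntiOn_cos.lt_iff_gt ⟨by positivity, by linarith [pi_pos]⟩ hβI).1 ?_⟩
  · rw [hcos, cos_pi_div_four]; exact sqrt_three_sub_one_div_lt
  · rw [hcos, cos_pi_div_two]; exact sqrt_three_sub_one_div_pos

theorem stmt_10 (b β : ℝ) (hb : 0 < b) (hb' : b < π / 2)
    (hcb : cos b = (3 + Real.sqrt 3) / 6)
    (hsb : sin b = Real.sqrt ((4 - Real.sqrt 3) / 6))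
    (hβ : 0 < β) (hβ' : β < π)
    (h : cos b = cos (π / 6) * cos b + sin (π / 6) * sin b * cos β) :
    cos β = (Real.sqrt 3 - 1) / Real.sqrt (2 * (4 - Real.sqrt 3)) ∧
      π / 4 < β ∧ β < π / 2 :=
  stmt_10_general b β hcb hsb hβ hβ' h
end

section
/- Then x satisfies the equation (1 − c)²·x³ + s·x² + (2c − c²)·x − s = 1/√5, and 0 < x < 1. (Thus x = cos a is the edge length parameter of the pentagonal subdivision of the icosahedron with δ = 6π/5.) -/
/-!
Write `r = √5`. Substituting `c = -(1 + r)/4` and reducing with `r² = 5`, eight times the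
difference of the two sides of the cubic equation becomes
`((3 + r) x + (5 + 3r)/5) · (5x² - (3r - 5)x - (3r - 4))`. The quadratic factor has discriminant
`5 (6r - 2)`, and `x` is its larger root `(3r - 5 + r√(6r - 2))/10 = (3 - r + √(6r - 2))/(2r)`.
The bounds `0 < x < 1` come down to `2 < r < 7/3`.
-/

open Real

lemma cubic_eq_of_quadratic {r c x : ℝ} (hr : r ^ 2 = 5) (hc : c = -(1 + r) / 4)
    (hq : 5 * x ^ 2 = (3 * r - 5) * x + (3 * r - 4)) :
    (1 - c) ^ 2 * x ^ 3 + (1 - c ^ 2) * x ^ 2 + (2 * c - c ^ 2) * x - (1 - c ^ 2) = r / 5 := by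
  subst hc
  linear_combination ((3 + r) * x + (5 + 3 * r) / 5) / 8 * hq
    + (x ^ 3 / 16 + 5 * x ^ 2 / 16 + 43 * x / 80 + 23 / 80) * hr

lemma quadratic_of_two_mul_eq {r t x : ℝ} (hr : r ^ 2 = 5) (ht : t ^ 2 = 6 * r - 2)
    (hx : 2 * r * x = 3 - r + t) :
    5 * x ^ 2 = (3 * r - 5) * x + (3 * r - 4) := by
  linear_combination (2 * r * x + r - 3 + t) / 4 * hx - (4 * x ^ 2 + 4 * x + 1) / 4 * hr + ht / 4

lemma pos_and_lt_one_of_two_mul_eq {r t x : ℝ} (hr₀ : 0 < r) (hr : r ^ 2 = 5) (ht₀ : 0 ≤ t)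
    (ht : t ^ 2 = 6 * r - 2) (hx : 2 * r * x = 3 - r + t) :
    0 < x ∧ x < 1 := by
  have hr₂ : 2 < r := by nlinarith
  have hr₇ : r < 7 / 3 := by nlinarith
  -- `t² = 6r - 2 < (3r - 3)²` is equivalent to `r < 7/3`
  have ht_lt : t < 3 * r - 3 := by nlinarith
  constructor
  · nlinarith
  · nlinarith

theorem stmt_11 (c s x : ℝ)
    (hc : c = -(1 + Real.sqrt 5) / 4)
    (hs : s = 1 - c ^ 2)
    (hx : x = (3 - Real.sqrt 5 + Real.sqrt (2 * (3 * Real.sqrt 5 - 1))) / (2 * Real.sqrt 5)) :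
    (1 - c) ^ 2 * x ^ 3 + s * x ^ 2 + (2 * c - c ^ 2) * x - s = 1 / Real.sqrt 5 ∧
      0 < x ∧ x < 1 := by
  have hr : √5 ^ 2 = 5 := sq_sqrt (by norm_num)
  have hr₀ : 0 < √5 := by positivity
  have ht : √(2 * (3 * √5 - 1)) ^ 2 = 6 * √5 - 2 := by
    rw [sq_sqrt (by nlinarith)]; ring
  have hx₂ : 2 * √5 * x = 3 - √5 + √(2 * (3 * √5 - 1)) := by
    rw [hx]; field_simp
  refine ⟨?_, pos_and_lt_one_of_two_mul_eq hr₀ hr (sqrt_nonneg _) ht hx₂⟩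
  rw [hs, ← sqrt_div_self']
  exact cubic_eq_of_quadratic hr hc (quadratic_of_two_mul_eq hr ht hx₂)
end

section
/- The cubic polynomial p(x) = x³ + (5 − 2√5)x² + (13 − 6√5)x + 1 − (4/5)√5 has exactly one root in the open interval (0, 1). -/
/-!
The cubic is negative at `0` and positive at `1`, so it has a root in `(0, 1)` by the
intermediate value theorem. Its coefficient `5 - 2√5` of `x²` is nonnegative, so it is convex on
`[0, ∞)`; a convex function that is negative at the left end of an interval vanishes at most once
in it, since a secant from the left endpoint to a zero has positive slope.
-/

open Set

theorem ConvexOn.eq_of_apply_eq_zero {f : ℝ → ℝ} {a b x y : ℝ} (hf : ConvexOn ℝ (Icc a b) f)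
    (ha : f a < 0) (hx : x ∈ Ioc a b) (hy : y ∈ Ioc a b) (hfx : f x = 0) (hfy : f y = 0) :
    x = y := by
  wlog hxy : x < y generalizing x y
  · rcases (not_lt.1 hxy).lt_or_eq with h | h
    · exact (this hy hx hfy hfx h).symm
    · exact h.symm
  have hslope := hf.slope_mono_adjacent (left_mem_Icc.2 (hx.1.le.trans hx.2))
    (Ioc_subset_Icc_self hy) hx.1 hxy
  rw [hfx, hfy, sub_self, zero_div, zero_sub] at hslope
  have : 0 < -f a / (x - a) := div_pos (neg_pos.2 ha) (sub_pos.2 hx.1)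
  linarith

theorem existsUnique_zero_Ioo_of_convexOn {f : ℝ → ℝ} {a b : ℝ} (hab : a ≤ b)
    (hcont : ContinuousOn f (Icc a b)) (hconv : ConvexOn ℝ (Icc a b) f) (ha : f a < 0)
    (hb : 0 < f b) : ∃! x, x ∈ Ioo a b ∧ f x = 0 := by
  obtain ⟨x, hx, hfx⟩ := intermediate_value_Ioo hab hcont ⟨ha, hb⟩
  exact ⟨x, ⟨hx, hfx⟩, fun y ⟨hy, hfy⟩ =>
    hconv.eq_of_apply_eq_zero ha (Ioo_subset_Ioc_self hy) (Ioo_subset_Ioc_self hx) hfy hfx⟩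

theorem convexOn_cubic {b c d : ℝ} (hb : 0 ≤ b) :
    ConvexOn ℝ (Ici 0) fun x : ℝ => x ^ 3 + b * x ^ 2 + c * x + d := by
  have hlin : ConvexOn ℝ (Ici 0) fun x : ℝ => c * x :=
    (LinearMap.mulLeft ℝ c).convexOn (convex_Ici 0)
  exact (((convexOn_pow 3).add ((convexOn_pow 2).smul hb)).add hlin).add_const d

theorem stmt_12 :
    ∃! x : ℝ, x ∈ Set.Ioo (0 : ℝ) 1 ∧
      x ^ 3 + (5 - 2 * Real.sqrt 5) * x ^ 2 + (13 - 6 * Real.sqrt 5) * x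
        + 1 - (4 / 5) * Real.sqrt 5 = 0 := by
  have hsq : Real.sqrt 5 ^ 2 = 5 := Real.sq_sqrt (by norm_num)
  have hlow : 2 < Real.sqrt 5 := by nlinarith [Real.sqrt_nonneg 5]
  have hup : Real.sqrt 5 < 9 / 4 := by nlinarith [Real.sqrt_nonneg 5]
  simp_rw [add_sub_assoc]
  refine existsUnique_zero_Ioo_of_convexOn zero_le_one (by fun_prop)
    ((convexOn_cubic (by linarith)).subset Icc_subset_Ici_self (convex_Icc 0 1)) ?_ ?_
  · norm_num
    linarith
  · norm_num
    linarith
end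

section
/- The cubic polynomial q(x) = x³ + (3 − 2√2)x² + (5 − 4√2)x − 3 + 2√2 has exactly one root in the open interval (0, 1). -/
/- A cubic q = x³ + c₂ x² + c₁ x + c₀ with q 0 < 0 < q 1 has a root in (0, 1) by the
intermediate value theorem. If moreover c₂ ≥ 0, it has at most one positive root: for roots
0 < a < b we get a (a² + c₂ a + c₁) = -c₀ > 0, so the difference quotient
(q b - q a) / (b - a) = (a² + c₂ a + c₁) + b (a + b + c₂) is positive. For the given
coefficients all three sign conditions follow from √2 < 3/2. -/

theorem subsingleton_pos_roots_cubic {c₂ c₁ c₀ : ℝ} (h₂ : 0 ≤ c₂) (h₀ : c₀ < 0) :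
    {x : ℝ | 0 < x ∧ x ^ 3 + c₂ * x ^ 2 + c₁ * x + c₀ = 0}.Subsingleton := by
  suffices key : ∀ a b : ℝ, 0 < a → a < b →
      a ^ 3 + c₂ * a ^ 2 + c₁ * a + c₀ = 0 → b ^ 3 + c₂ * b ^ 2 + c₁ * b + c₀ ≠ 0 by
    rintro a ⟨ha, hqa⟩ b ⟨hb, hqb⟩
    rcases lt_trichotomy a b with hab | rfl | hab
    · exact absurd hqb (key a b ha hab hqa)
    · rfl
    · exact absurd hqa (key b a hb hab hqb)
  intro a b ha hab hqa hqb
  have hquad : 0 < a ^ 2 + c₂ * a + c₁ := by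
    have : a * (a ^ 2 + c₂ * a + c₁) = -c₀ := by linear_combination hqa
    exact pos_of_mul_pos_right (by linarith) ha.le
  have hslope : 0 < (a ^ 2 + c₂ * a + c₁) + b * (a + b + c₂) := by
    have : 0 < b * (a + b + c₂) := by
      have := ha.trans hab
      positivity
    linarith
  have := mul_pos (sub_pos.mpr hab) hslope
  linarith [show (b - a) * ((a ^ 2 + c₂ * a + c₁) + b * (a + b + c₂)) = 0 by
    linear_combination hqb - hqa]

theorem existsUnique_cubic_root_Ioo {c₂ c₁ c₀ : ℝ} (h₂ : 0 ≤ c₂) (h₀ : c₀ < 0)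
    (h₁ : 0 < 1 + c₂ + c₁ + c₀) :
    ∃! x : ℝ, x ∈ Set.Ioo (0 : ℝ) 1 ∧ x ^ 3 + c₂ * x ^ 2 + c₁ * x + c₀ = 0 := by
  have hcont : ContinuousOn (fun x : ℝ ↦ x ^ 3 + c₂ * x ^ 2 + c₁ * x + c₀) (Set.Icc 0 1) := by
    fun_prop
  obtain ⟨x, hx, hqx⟩ :=
    intermediate_value_Ioo zero_le_one hcont ⟨by simpa using h₀, by simpa using h₁⟩
  exact ⟨x, ⟨hx, hqx⟩, fun y hy ↦
    subsingleton_pos_roots_cubic h₂ h₀ ⟨hy.1.1, hy.2⟩ ⟨hx.1, hqx⟩⟩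

theorem stmt_13 :
    ∃! x : ℝ, x ∈ Set.Ioo (0 : ℝ) 1 ∧
      x ^ 3 + (3 - 2 * Real.sqrt 2) * x ^ 2 + (5 - 4 * Real.sqrt 2) * x
        - 3 + 2 * Real.sqrt 2 = 0 := by
  have hsqrt : Real.sqrt 2 < 3 / 2 := (Real.sqrt_lt' (by norm_num)).mpr (by norm_num)
  have hroot := existsUnique_cubic_root_Ioo (c₂ := 3 - 2 * Real.sqrt 2)
    (c₁ := 5 - 4 * Real.sqrt 2) (c₀ := -3 + 2 * Real.sqrt 2) (by linarith) (by linarith)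
    (by linarith)
  convert hroot using 4
  ring
end
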